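/- arXiv:2412.19277 — 6 statements merged into one kernel-verified Lean document; each statement's English description precedes it below -/
import Mathlib

section
/- For a bornology 𝓑 on a metric space X, the topology of strong uniform convergence τ_𝓑^s on C(X) coincides with the topology of strong uniform convergence on the closure bornology 𝓑̄. -/
open Set Filter

def IsBorn {X : Type*} [MetricSpace X] (𝓑 : Set (Set X)) : Prop :=
  (∀ x : X, ∃ B ∈ 𝓑, x ∈ B) ∧
  (∀ A B : Set X, A ∈ 𝓑 → B ∈ 𝓑 → A ∪ B ∈ 𝓑) ∧
  (∀ A B : Set X, B ∈ 𝓑 → A ⊆ B → A.Nonempty → A ∈ 𝓑)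

/-- The open `δ`-enlargement `B^δ = ⋃_{y ∈ B} {x : d(x,y) < δ}` of a set. -/
def enl {X : Type*} [MetricSpace X] (B : Set X) (δ : ℝ) : Set X :=
  {x : X | ∃ y ∈ B, dist x y < δ}

/-- The topology `τ_𝓑^s` of strong uniform convergence on `𝓑`, with neighborhood filters
`𝓝 f = ⨅_{B ∈ 𝓑, ε > 0} 𝓟 {g : ∃ δ > 0, ∀ x ∈ B^δ, |f x - g x| < ε}`. -/
def topOfBornStrong {X : Type*} [MetricSpace X] (𝓑 : Set (Set X)) :
    TopologicalSpace C(X, ℝ) :=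
  TopologicalSpace.mkOfNhds fun f =>
    ⨅ B ∈ 𝓑, ⨅ ε : {e : ℝ // 0 < e},
      𝓟 {g : C(X, ℝ) | ∃ δ > 0, ∀ x ∈ enl B δ, |f x - g x| < ε.1}

/-- `τ_𝓑^s = τ_𝓑̄^s` on `C(X)`, where `𝓑̄` is the closure bornology. -/
theorem topOfBornStrong_closure {X : Type*} [MetricSpace X] (𝓑 : Set (Set X))
    (h𝓑 : IsBorn 𝓑) :
    topOfBornStrong 𝓑 =
      topOfBornStrong {A : Set X | A.Nonempty ∧ ∃ B ∈ 𝓑, A ⊆ closure B} := by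
  unfold topOfBornStrong
  congr 1
  funext f
  apply le_antisymm
  · refine le_iInf₂ fun A hA => le_iInf fun ε => ?_
    obtain ⟨hAne, B, hB, hAB⟩ := hA
    refine iInf_le_of_le B (iInf₂_le_of_le hB ε ?_)
    refine principal_mono.2 fun g hg => ?_
    obtain ⟨δ, hδ, hgd⟩ := hg
    refine ⟨δ / 2, by linarith, fun x hx => ?_⟩
    obtain ⟨y, hyA, hxy⟩ := hx
    obtain ⟨y', hy'B, hyy'⟩ :=
      Metric.mem_closure_iff.1 (hAB hyA) (δ / 2) (by linarith)
    refine hgd x ⟨y', hy'B, ?_⟩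
    calc dist x y' ≤ dist x y + dist y y' := dist_triangle _ _ _
      _ < δ := by linarith
  · refine le_iInf₂ fun B hB => le_iInf fun ε => ?_
    rcases B.eq_empty_or_nonempty with rfl | hBne
    · refine le_principal_iff.2 ?_
      have h : {g : C(X, ℝ) | ∃ δ > 0, ∀ x ∈ enl (∅ : Set X) δ, |f x - g x| < ε.1}
          = univ := by
        ext g
        simp only [mem_setOf_eq, mem_univ, iff_true]
        exact ⟨1, one_pos, fun x hx => absurd hx (by simp [enl])⟩
      rw [h]
      exact univ_mem
    · exact iInf_le_of_le B (iInf₂_le_of_le ⟨hBne, B, hB, subset_closure⟩ ε le_rfl)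
end

section
/- Let ρ be a continuous extended seminorm on an extended locally convex space (Z,τ), and suppose Z = Z_fin^ρ ⊕ M algebraically for a subspace M. Then M with the subspace topology from (Z,τ) is discrete. -/
open Set Filter ENNReal

variable {Z : Type*} [AddCommGroup Z] [Module ℝ Z]

def IsExtSeminorm (ρ : Z → ℝ≥0∞) : Prop :=
  (∀ (c : ℝ) (x : Z), ρ (c • x) = (‖c‖₊ : ℝ≥0∞) * ρ x) ∧
  (∀ x y : Z, ρ (x + y) ≤ ρ x + ρ y)

def elcsTop (Ps : Set (Z → ℝ≥0∞)) : TopologicalSpace Z :=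
  TopologicalSpace.mkOfNhds fun x =>
    ⨅ ρ ∈ Ps, ⨅ ε : {e : ℝ≥0∞ // 0 < e}, 𝓟 {y : Z | ρ (y - x) < ε.1}

/-! By continuity of `ρ`, the subspace `Z_fin^ρ = ρ⁻¹' [0, ⊤)` is open. Translations are
continuous for the topology of an elcs, so each coset `m + Z_fin^ρ` is open too, and it meets
the complement `M` only in `m`. -/

theorem continuous_add_right_elcsTop {E : Type*} [AddCommGroup E] (Ps : Set (E → ℝ≥0∞))
    (a : E) :
    @Continuous E E (elcsTop Ps) (elcsTop Ps) (· + a) := by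
  let := elcsTop Ps
  refine continuous_def.2 fun s hs x hx => ?_
  suffices h : Tendsto (· + a) (⨅ ρ ∈ Ps, ⨅ ε : {e : ℝ≥0∞ // 0 < e}, 𝓟 {y : E | ρ (y - x) < ε.1})
      (⨅ ρ ∈ Ps, ⨅ ε : {e : ℝ≥0∞ // 0 < e}, 𝓟 {y : E | ρ (y - (x + a)) < ε.1}) from
    h (hs (x + a) hx)
  simp only [tendsto_iInf, tendsto_principal, mem_ofPred_eq, add_sub_add_right_eq_sub]
  exact fun ρ hρ ε =>
    mem_iInf_of_mem ρ <| mem_iInf_of_mem hρ <| mem_iInf_of_mem ε <| mem_principal_self _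

theorem AddSubgroup.discreteTopology_of_isOpen_of_disjoint {G : Type*} [AddGroup G]
    [TopologicalSpace G] (hadd : ∀ a : G, Continuous (· + a)) {S M : AddSubgroup G}
    (hS : IsOpen (S : Set G)) (hSM : Disjoint S M) : DiscreteTopology M := by
  refine discreteTopology_iff_isOpen_singleton.2 fun m =>
    ⟨(· + -(m : G)) ⁻¹' S, (hadd _).isOpen_preimage _ hS, ?_⟩
  ext y
  simp only [mem_preimage, mem_singleton_iff, SetLike.mem_coe, ← sub_eq_add_neg]
  constructor
  · intro hy
    exact Subtype.ext <| sub_eq_zero.1 <| AddSubgroup.disjoint_def.1 hSM hy (sub_mem y.2 m.2)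
  · rintro rfl
    simp

theorem complement_discrete_general (Ps : Set (Z → ℝ≥0∞))
    (ρ : Z → ℝ≥0∞)
    (hcont : @Continuous Z ℝ≥0∞ (elcsTop Ps) _ ρ)
    (S M : Submodule ℝ Z) (hS : (S : Set Z) = {x : Z | ρ x < ⊤})
    (hcompl : IsCompl S M) :
    @DiscreteTopology M (TopologicalSpace.induced (Subtype.val : M → Z) (elcsTop Ps)) := by
  let := elcsTop Ps
  have hS_open : IsOpen (S : Set Z) := hS ▸ hcont.isOpen_preimage _ isOpen_Iio
  exact AddSubgroup.discreteTopology_of_isOpen_of_disjoint (continuous_add_right_elcsTop Ps)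
    (S := S.toAddSubgroup) (M := M.toAddSubgroup) hS_open
    (AddSubgroup.disjoint_def.2 fun hx hy => Submodule.disjoint_def.1 hcompl.disjoint _ hx hy)

/-- if `ρ` is a continuous extended seminorm on an elcs `(Z, τ)` and
`Z = Z_fin^ρ ⊕ M` algebraically, then `M` with the subspace topology is discrete. -/
theorem complement_discrete (Ps : Set (Z → ℝ≥0∞)) (hPs : ∀ ρ ∈ Ps, IsExtSeminorm ρ)
    (ρ : Z → ℝ≥0∞) (hρ : IsExtSeminorm ρ)
    (hcont : @Continuous Z ℝ≥0∞ (elcsTop Ps) _ ρ)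
    (S M : Submodule ℝ Z) (hS : (S : Set Z) = {x : Z | ρ x < ⊤})
    (hcompl : IsCompl S M) :
    @DiscreteTopology M (TopologicalSpace.induced (Subtype.val : M → Z) (elcsTop Ps)) :=
  complement_discrete_general Ps ρ hcont S M hS hcompl
end

section
/- Let X be a metric space, 𝓑 a bornology on X, and F a nonzero continuous linear functional on (C(X), τ_𝓑) that is supported on closed sets A and B in 𝓑. Then A ∩ B is nonempty and F is supported on A ∩ B. -/
open Set Filter

def topOfBorn {X : Type*} [MetricSpace X] (𝓑 : Set (Set X)) : TopologicalSpace C(X, ℝ) :=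
  TopologicalSpace.mkOfNhds fun f =>
    ⨅ B ∈ 𝓑, ⨅ ε : {e : ℝ // 0 < e}, 𝓟 {g : C(X, ℝ) | ∀ x ∈ B, |f x - g x| < ε.1}

/-!
If `f` vanishes on `A ∩ B`, the function equal to `f` on `A` and to `0` on `B` is well defined
and continuous on the closed set `A ∪ B`; by Tietze it extends to some `h ∈ C(X)`. Then
`f - h` vanishes on `A` and `h` vanishes on `B`, so `F f = F (f - h) + F h = 0`. If `A ∩ B`
were empty, every `f` would be annihilated and `F` would be zero.
-/

universe u v

section Extension

variable {X : Type u} [TopologicalSpace X] [NormalSpace X]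
  {Y : Type v} [TopologicalSpace Y] [TietzeExtension.{u, v} Y]

theorem ContinuousOn.exists_continuousMap_eqOn {s : Set X} (hs : IsClosed s) {f : X → Y}
    (hf : ContinuousOn f s) : ∃ g : C(X, Y), EqOn g f s := by
  obtain ⟨g, hg⟩ := ContinuousMap.exists_restrict_eq hs ⟨s.domRestrict f, hf.domRestrict⟩
  exact ⟨g, fun x hx => congrArg (· ⟨x, hx⟩) hg⟩

theorem exists_continuousMap_eqOn_and_eqOn_zero [Zero Y] {A B : Set X}
    (hA : IsClosed A) (hB : IsClosed B) (f : C(X, Y)) (hf : ∀ x ∈ A ∩ B, f x = 0) :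
    ∃ h : C(X, Y), EqOn h f A ∧ EqOn h 0 B := by
  classical
  let g : X → Y := B.piecewise 0 f
  have hgA : EqOn g f A := fun x hxA => by
    by_cases hxB : x ∈ B
    · simp [g, hxB, hf x ⟨hxA, hxB⟩]
    · simp [g, hxB]
  have hgB : EqOn g 0 B := fun x hxB => by simp [g, hxB]
  have hg : ContinuousOn g (A ∪ B) :=
    (f.continuous.continuousOn.congr hgA).union_of_isClosed
      (continuousOn_const.congr hgB) hA hB
  obtain ⟨h, hh⟩ := hg.exists_continuousMap_eqOn (hA.union hB)
  exact ⟨h, fun x hx => (hh (.inl hx)).trans (hgA hx),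
    fun x hx => (hh (.inr hx)).trans (hgB hx)⟩

theorem map_eq_zero_of_eqOn_zero_inter [AddGroup Y] [IsTopologicalAddGroup Y]
    {𝓕 M : Type*} [AddZeroClass M] [FunLike 𝓕 C(X, Y) M] [AddMonoidHomClass 𝓕 C(X, Y) M]
    (F : 𝓕) {A B : Set X} (hA : IsClosed A) (hB : IsClosed B)
    (hsuppA : ∀ f : C(X, Y), (∀ x ∈ A, f x = 0) → F f = 0)
    (hsuppB : ∀ f : C(X, Y), (∀ x ∈ B, f x = 0) → F f = 0)
    (f : C(X, Y)) (hf : ∀ x ∈ A ∩ B, f x = 0) : F f = 0 := by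
  obtain ⟨h, hhA, hhB⟩ := exists_continuousMap_eqOn_and_eqOn_zero hA hB f hf
  have hfh : F (f - h) = 0 := hsuppA _ fun x hx => by simp [hhA hx]
  rw [← sub_add_cancel f h, map_add, hfh, hsuppB h hhB, add_zero]

end Extension

theorem supported_inter_general {X : Type*} [MetricSpace X] (F : C(X, ℝ) →ₗ[ℝ] ℝ) (hF0 : F ≠ 0)
    (A B : Set X) (hA : IsClosed A) (hB : IsClosed B)
    (hsuppA : ∀ f : C(X, ℝ), (∀ x ∈ A, f x = 0) → F f = 0)
    (hsuppB : ∀ f : C(X, ℝ), (∀ x ∈ B, f x = 0) → F f = 0) :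
    (A ∩ B).Nonempty ∧ ∀ f : C(X, ℝ), (∀ x ∈ A ∩ B, f x = 0) → F f = 0 := by
  have hsupp := map_eq_zero_of_eqOn_zero_inter F hA hB hsuppA hsuppB
  refine ⟨nonempty_iff_ne_empty.2 fun hAB => hF0 ?_, hsupp⟩
  exact LinearMap.ext fun f => hsupp f (by simp [hAB])

/-- if a nonzero continuous linear functional `F` on `(C(X), τ_𝓑)` is
supported on closed sets `A, B ∈ 𝓑`, then `A ∩ B ≠ ∅` and `F` is supported on `A ∩ B`. -/
theorem supported_inter {X : Type*} [MetricSpace X] (𝓑 : Set (Set X))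
    (h𝓑 : IsBorn 𝓑) (F : C(X, ℝ) →ₗ[ℝ] ℝ)
    (hF : @Continuous C(X, ℝ) ℝ (topOfBorn 𝓑) _ F) (hF0 : F ≠ 0)
    (A B : Set X) (hA𝓑 : A ∈ 𝓑) (hB𝓑 : B ∈ 𝓑) (hA : IsClosed A) (hB : IsClosed B)
    (hsuppA : ∀ f : C(X, ℝ), (∀ x ∈ A, f x = 0) → F f = 0)
    (hsuppB : ∀ f : C(X, ℝ), (∀ x ∈ B, f x = 0) → F f = 0) :
    (A ∩ B).Nonempty ∧ ∀ f : C(X, ℝ), (∀ x ∈ A ∩ B, f x = 0) → F f = 0 :=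
  supported_inter_general F hF0 A B hA hB hsuppA hsuppB
end

section
/- Let X = ℝ and let 𝓑 be the bornology with base 𝓑₀ = {ℕ ∪ A : A a nonempty finite subset of ℝ}. Then 𝓑 is not shielded from closed sets: the set C = ∪_{n≥k}[n + 1/n, n + 1 − 1/n] (for suitable k) is a closed set disjoint from any ℕ ∪ A with A finite, yet C ∩ ℕ^δ ≠ ∅ for every δ > 0. -/
open Set Filter

/-- `A₁ ⊇ A` is a shield for `A` if every nonempty closed set `C` disjoint from `A₁`
satisfies `C ∩ A^δ = ∅` for some `δ > 0`. -/
def IsShield {X : Type*} [MetricSpace X] (A A₁ : Set X) : Prop :=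
  A ⊆ A₁ ∧ ∀ C : Set X, IsClosed C → C.Nonempty → C ∩ A₁ = ∅ → ∃ δ > 0, C ∩ enl A δ = ∅

/-- A bornology is shielded from closed sets if every member has a closed shield in it. -/
def ShieldedFromClosed {X : Type*} [MetricSpace X] (𝓑 : Set (Set X)) : Prop :=
  ∀ A ∈ 𝓑, ∃ A₁ ∈ 𝓑, IsClosed A₁ ∧ IsShield A A₁

lemma locfin_aux : LocallyFinite (fun n : ℕ => Icc ((n : ℝ) + 1 / n) ((n : ℝ) + 1 - 1 / n)) := by
  intro x
  refine ⟨Ioo (x - 1) (x + 1), Ioo_mem_nhds (by linarith) (by linarith), ?_⟩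
  apply Set.Finite.subset (Set.finite_Iio (⌈x + 1⌉₊))
  rintro n ⟨y, hy⟩
  simp only [Set.mem_Iio]
  rw [Nat.lt_ceil]
  have h1 : (n:ℝ) + 1/n ≤ y := hy.1.1
  have h2 : y < x + 1 := hy.2.2
  have h3 : (0:ℝ) ≤ 1/n := by positivity
  linarith

lemma closedC (k : ℕ) :
    IsClosed (⋃ n ∈ {n : ℕ | k ≤ n}, Icc ((n : ℝ) + 1 / n) ((n : ℝ) + 1 - 1 / n)) := by
  have hlf : LocallyFinite (fun n : ℕ => ⋃ _ : n ∈ {n : ℕ | k ≤ n},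
      Icc ((n : ℝ) + 1 / n) ((n : ℝ) + 1 - 1 / n)) := by
    apply locfin_aux.subset
    intro n
    exact Set.iUnion_subset fun _ => subset_rfl
  exact hlf.isClosed_iUnion fun n => by
    by_cases h : k ≤ n <;> simp [h, isClosed_Icc]

lemma part2 : ∀ A : Set ℝ, A.Finite → ∃ k : ℕ, 3 < k ∧
      IsClosed (⋃ n ∈ {n : ℕ | k ≤ n}, Icc ((n : ℝ) + 1 / n) ((n : ℝ) + 1 - 1 / n)) ∧
      (⋃ n ∈ {n : ℕ | k ≤ n}, Icc ((n : ℝ) + 1 / n) ((n : ℝ) + 1 - 1 / n)) ∩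
        (Set.range ((↑) : ℕ → ℝ) ∪ A) = ∅ ∧
      ∀ δ > 0, ((⋃ n ∈ {n : ℕ | k ≤ n}, Icc ((n : ℝ) + 1 / n) ((n : ℝ) + 1 - 1 / n)) ∩
        enl (Set.range ((↑) : ℕ → ℝ)) δ).Nonempty := by
  intro A hA
  obtain ⟨M, hM⟩ := (hA.bddAbove)
  refine ⟨max 4 (⌈M⌉₊ + 1), lt_of_lt_of_le (by norm_num) (le_max_left _ _), closedC _, ?_, ?_⟩
  · -- disjointness
    ext x
    simp only [Set.mem_inter_iff, Set.mem_iUnion, Set.mem_setOf_eq, Set.mem_empty_iff_false,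
      iff_false, not_and, not_or]
    rintro ⟨n, hn, hx⟩
    have hn4 : 4 ≤ n := le_trans (le_max_left _ _) hn
    have hnpos : (0:ℝ) < 1/n := by positivity
    have hx1 : (n:ℝ) + 1/n ≤ x := hx.1
    have hx2 : x ≤ (n:ℝ) + 1 - 1/n := hx.2
    rintro (⟨m, rfl⟩ | hxA)
    · have h1 : (n:ℝ) < m := by linarith
      have h2 : (m:ℝ) < n + 1 := by linarith
      have h1' : n < m := by exact_mod_cast h1
      have h2' : m < n + 1 := by exact_mod_cast h2
      omega
    · have hxM : x ≤ M := hM hxA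
      have hk : M ≤ (⌈M⌉₊ : ℝ) := Nat.le_ceil M
      have hn' : (⌈M⌉₊ + 1 : ℕ) ≤ n := le_trans (le_max_right _ _) hn
      have hc : ((⌈M⌉₊ + 1 : ℕ) : ℝ) ≤ n := by exact_mod_cast hn'
      push_cast at hc
      linarith
  · -- meets every enlargement
    intro δ hδ
    set n : ℕ := max (max 4 (⌈M⌉₊ + 1)) (⌈1/δ⌉₊ + 1) with hn
    have hn4 : 4 ≤ n := le_trans (le_max_left _ _) (le_max_left _ _)
    have hnpos : (0:ℝ) < n := by positivity
    have hinv : 1/(n:ℝ) < δ := by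
      have h1 : (⌈1/δ⌉₊ + 1 : ℕ) ≤ n := le_max_right _ _
      have h2 : (1:ℝ)/δ ≤ (⌈1/δ⌉₊ : ℝ) := Nat.le_ceil _
      have h3 : ((⌈1/δ⌉₊ + 1 : ℕ) : ℝ) ≤ n := by exact_mod_cast h1
      push_cast at h3
      have h4 : 1/δ < (n:ℝ) := by linarith
      rw [div_lt_iff₀ hnpos]
      calc (1:ℝ) = (1/δ) * δ := by field_simp
        _ < n * δ := mul_lt_mul_of_pos_right h4 hδ
        _ = δ * n := mul_comm _ _
    refine ⟨(n:ℝ) + 1/n, ?_, ⟨(n:ℝ), ⟨n, rfl⟩, ?_⟩⟩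
    · refine Set.mem_biUnion (show max 4 (⌈M⌉₊ + 1) ≤ n from le_max_left _ _) ?_
      constructor
      · exact le_refl _
      · have : (1:ℝ)/n ≤ 1/4 := by
          apply one_div_le_one_div_of_le
          · norm_num
          · exact_mod_cast hn4
        linarith
    · have h0 : (0:ℝ) < 1/n := by positivity
      rw [Real.dist_eq, show (n:ℝ) + 1/n - (n:ℝ) = 1/n by ring, abs_of_pos h0]
      exact hinv

/-- the bornology on `ℝ` with base `{ℕ ∪ A : A nonempty finite}` is not
shielded from closed sets; witnessed by the closed sets `C_k = ⋃_{n ≥ k} [n + 1/n, n + 1 − 1/n]`,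
which are disjoint from `ℕ ∪ A` (for suitable `k` depending on the finite set `A`) yet
meet every enlargement `ℕ^δ`. -/
theorem not_shielded_example :
    ¬ ShieldedFromClosed {S : Set ℝ | S.Nonempty ∧
        ∃ A : Set ℝ, A.Finite ∧ A.Nonempty ∧ S ⊆ Set.range ((↑) : ℕ → ℝ) ∪ A} ∧
    ∀ A : Set ℝ, A.Finite → ∃ k : ℕ, 3 < k ∧
      IsClosed (⋃ n ∈ {n : ℕ | k ≤ n}, Icc ((n : ℝ) + 1 / n) ((n : ℝ) + 1 - 1 / n)) ∧
      (⋃ n ∈ {n : ℕ | k ≤ n}, Icc ((n : ℝ) + 1 / n) ((n : ℝ) + 1 - 1 / n)) ∩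
        (Set.range ((↑) : ℕ → ℝ) ∪ A) = ∅ ∧
      ∀ δ > 0, ((⋃ n ∈ {n : ℕ | k ≤ n}, Icc ((n : ℝ) + 1 / n) ((n : ℝ) + 1 - 1 / n)) ∩
        enl (Set.range ((↑) : ℕ → ℝ)) δ).Nonempty := by
  refine ⟨?_, part2⟩
  intro h
  obtain ⟨A₁, ⟨hA₁ne, A, hAfin, hAne, hsub⟩, hclosed, hshA, hshield⟩ :=
    h (Set.range ((↑) : ℕ → ℝ))
      ⟨Set.range_nonempty _, {0}, Set.finite_singleton 0, Set.singleton_nonempty 0,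
        Set.subset_union_left⟩
  obtain ⟨k, hk3, hCclosed, hCdisj, hCmeet⟩ := part2 A hAfin
  set C := ⋃ n ∈ {n : ℕ | k ≤ n}, Icc ((n : ℝ) + 1 / n) ((n : ℝ) + 1 - 1 / n) with hC
  have hCA₁ : C ∩ A₁ = ∅ := by
    apply Set.eq_empty_of_subset_empty
    rw [← hCdisj]
    exact Set.inter_subset_inter_right _ hsub
  have hCne : C.Nonempty := ((hCmeet 1 one_pos).mono Set.inter_subset_left)
  obtain ⟨δ, hδ, hδeq⟩ := hshield C hCclosed hCne hCA₁
  exact (hCmeet δ hδ).ne_empty hδeq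
end

section
/- Let F ∈ (C(X), τ_𝓑)* and suppose |F(f)| ≤ ρ_B(f) for all f ∈ C(X), where B ∈ 𝓑 is closed. Then there exists a unique bounded linear functional F_B on (C_b(B), ‖·‖_∞) such that F_B(f|_B) = F(f) for all f ∈ C(X) with sup_{x∈B}|f(x)| < ∞, and ‖F_B‖ ≤ 1. -/
open Set Filter ENNReal

/-- The extended seminorm `ρ_B(f) = sup_{x ∈ B} |f x|`. -/
noncomputable def rhoB {X : Type*} [MetricSpace X] (B : Set X) (f : C(X, ℝ)) : ℝ≥0∞ :=
  ⨆ x ∈ B, (‖f x‖₊ : ℝ≥0∞)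

/-- Restriction of a continuous function which is bounded on `B` to a bounded continuous
function on `B`. -/
noncomputable def restrictBCF {X : Type*} [MetricSpace X] (B : Set X) (f : C(X, ℝ))
    (hf : ∃ M : ℝ, ∀ x ∈ B, |f x| ≤ M) : BoundedContinuousFunction B ℝ :=
  BoundedContinuousFunction.mkOfBound (ContinuousMap.restrict B f)
    (2 * hf.choose) (by
      have hM := hf.choose_spec
      set M := hf.choose with hMdef
      intro x y
      have hx := hM x.1 x.2
      have hy := hM y.1 y.2
      simp only [ContinuousMap.restrict_apply, Real.dist_eq]
      calc |f x.1 - f y.1| ≤ |f x.1| + |f y.1| := abs_sub _ _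
        _ ≤ M + M := add_le_add hx hy
        _ = 2 * M := by ring)

/-! Since `|F f| ≤ ρ_B(f)`, `F` kills every function vanishing on `B`, so `F f` only depends on
`f|_B`. By Tietze every `g ∈ C_b(B)` is such a restriction, and `F_B g := F (extension of g)` is
then well defined, linear, of norm at most `1`, and forced by the restriction property. -/

open scoped BoundedContinuousFunction

namespace RestrictedFunctional

variable {X : Type*} [MetricSpace X] {B : Set X}

theorem rhoB_le_iff {f : C(X, ℝ)} {c : ℝ≥0∞} :
    rhoB B f ≤ c ↔ ∀ x ∈ B, (‖f x‖₊ : ℝ≥0∞) ≤ c :=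
  iSup₂_le_iff

variable {F : C(X, ℝ) →ₗ[ℝ] ℝ}

theorem map_eq_of_eqOn (hF : ∀ f : C(X, ℝ), (‖F f‖₊ : ℝ≥0∞) ≤ rhoB B f) {f g : C(X, ℝ)}
    (hfg : EqOn f g B) : F f = F g := by
  have hρ : rhoB B (f - g) ≤ 0 :=
    rhoB_le_iff.2 fun x hx => by simp [hfg hx]
  have hsub : F (f - g) = 0 := by
    simpa using (hF (f - g)).trans hρ
  rwa [map_sub, sub_eq_zero] at hsub

variable (hB : IsClosed B)

noncomputable def extend (g : B →ᵇ ℝ) : C(X, ℝ) :=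
  (ContinuousMap.exists_restrict_eq hB g.toContinuousMap).choose

theorem extend_apply (g : B →ᵇ ℝ) (x : B) : extend hB g x = g x :=
  DFunLike.congr_fun (ContinuousMap.exists_restrict_eq hB g.toContinuousMap).choose_spec x

theorem extend_bounded (g : B →ᵇ ℝ) : ∃ M : ℝ, ∀ x ∈ B, |extend hB g x| ≤ M :=
  ⟨‖g‖, fun x hx => by
    simpa [extend_apply hB g ⟨x, hx⟩] using g.norm_coe_le_norm ⟨x, hx⟩⟩

theorem restrictBCF_extend (g : B →ᵇ ℝ) : restrictBCF B (extend hB g) (extend_bounded hB g) = g :=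
  BoundedContinuousFunction.ext fun x => extend_apply hB g x

variable (hF : ∀ f : C(X, ℝ), (‖F f‖₊ : ℝ≥0∞) ≤ rhoB B f)

noncomputable def toLinearMap : (B →ᵇ ℝ) →ₗ[ℝ] ℝ where
  toFun g := F (extend hB g)
  map_add' g h := by
    rw [← map_add]
    exact map_eq_of_eqOn hF fun x hx => by
      simp [extend_apply hB _ ⟨x, hx⟩]
  map_smul' c g := by
    rw [RingHom.id_apply, ← map_smul]
    exact map_eq_of_eqOn hF fun x hx => by
      simp [extend_apply hB _ ⟨x, hx⟩]

theorem norm_toLinearMap_le (g : B →ᵇ ℝ) : ‖toLinearMap hB hF g‖ ≤ 1 * ‖g‖ := by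
  rw [one_mul, ← coe_nnnorm, ← coe_nnnorm, NNReal.coe_le_coe, ← ENNReal.coe_le_coe]
  refine (hF _).trans (rhoB_le_iff.2 fun x hx => ?_)
  rw [ENNReal.coe_le_coe, extend_apply hB g ⟨x, hx⟩]
  exact g.nnnorm_coe_le_nnnorm _

noncomputable def restrictedFunctional : (B →ᵇ ℝ) →L[ℝ] ℝ :=
  (toLinearMap hB hF).mkContinuous 1 (norm_toLinearMap_le hB hF)

theorem restrictedFunctional_restrictBCF (f : C(X, ℝ)) (hf : ∃ M : ℝ, ∀ x ∈ B, |f x| ≤ M) :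
    restrictedFunctional hB hF (restrictBCF B f hf) = F f :=
  map_eq_of_eqOn hF fun x hx => extend_apply hB _ ⟨x, hx⟩

theorem norm_restrictedFunctional_le : ‖restrictedFunctional hB hF‖ ≤ 1 :=
  LinearMap.mkContinuous_norm_le _ zero_le_one _

theorem eq_restrictedFunctional {FB : (B →ᵇ ℝ) →L[ℝ] ℝ}
    (hFB : ∀ (f : C(X, ℝ)) (hf : ∃ M : ℝ, ∀ x ∈ B, |f x| ≤ M), FB (restrictBCF B f hf) = F f) :
    FB = restrictedFunctional hB hF :=
  ContinuousLinearMap.ext fun g => by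
    rw [← restrictBCF_extend hB g, hFB, restrictedFunctional_restrictBCF]

end RestrictedFunctional

theorem exists_unique_restricted_functional_general {X : Type*} [MetricSpace X]
    (B : Set X) (hBcl : IsClosed B)
    (F : C(X, ℝ) →ₗ[ℝ] ℝ)
    (hbound : ∀ f : C(X, ℝ), (‖F f‖₊ : ℝ≥0∞) ≤ rhoB B f) :
    ∃! FB : BoundedContinuousFunction B ℝ →L[ℝ] ℝ,
      (∀ (f : C(X, ℝ)) (hf : ∃ M : ℝ, ∀ x ∈ B, |f x| ≤ M),
        FB (restrictBCF B f hf) = F f) ∧ ‖FB‖ ≤ 1 :=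
  ⟨RestrictedFunctional.restrictedFunctional hBcl hbound,
    ⟨RestrictedFunctional.restrictedFunctional_restrictBCF hBcl hbound,
      RestrictedFunctional.norm_restrictedFunctional_le hBcl hbound⟩,
    fun _ hFB => RestrictedFunctional.eq_restrictedFunctional hBcl hbound hFB.1⟩

/-- if `F ∈ (C(X), τ_𝓑)*` satisfies `|F f| ≤ ρ_B f` for all `f`, where
`B ∈ 𝓑` is closed, then there is a unique bounded linear functional `F_B` on
`(C_b(B), ‖·‖_∞)` with `F_B (f|_B) = F f` for all `f` bounded on `B`, and `‖F_B‖ ≤ 1`. -/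
theorem exists_unique_restricted_functional {X : Type*} [MetricSpace X]
    (𝓑 : Set (Set X)) (h𝓑 : IsBorn 𝓑) (B : Set X) (hB𝓑 : B ∈ 𝓑) (hBcl : IsClosed B)
    (F : C(X, ℝ) →ₗ[ℝ] ℝ) (hF : @Continuous C(X, ℝ) ℝ (topOfBorn 𝓑) _ F)
    (hbound : ∀ f : C(X, ℝ), (‖F f‖₊ : ℝ≥0∞) ≤ rhoB B f) :
    ∃! FB : BoundedContinuousFunction B ℝ →L[ℝ] ℝ,
      (∀ (f : C(X, ℝ)) (hf : ∃ M : ℝ, ∀ x ∈ B, |f x| ≤ M),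
        FB (restrictBCF B f hf) = F f) ∧ ‖FB‖ ≤ 1 :=
  exists_unique_restricted_functional_general B hBcl F hbound
end

section
/- Let X = ℝ with the usual metric and B = ℕ. Define h ∈ C(ℝ) by h(x) = 0 for x ≤ 1, h(x) = n(n+1)(x−n) for n ≤ x ≤ n + 1/(n+1), and h(x) = (n+1)(n+1−x) for n + 1/(n+1) ≤ x ≤ n+1 (n ∈ ℕ). Then h vanishes on ℕ but ρ_B^s(h) = inf_{δ>0} sup_{x∈B^δ}|h(x)| = ∞. -/
open Set Filter ENNReal

/-- The strong extended seminorm `ρ_B^s(f) = inf_{δ > 0} sup_{x ∈ B^δ} |f x|`. -/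
noncomputable def rhoBs {X : Type*} [MetricSpace X] (B : Set X) (f : C(X, ℝ)) : ℝ≥0∞ :=
  ⨅ δ : {d : ℝ // 0 < d}, ⨆ x ∈ enl B δ.1, (‖f x‖₊ : ℝ≥0∞)

/-- the continuous function `h` on `ℝ` with `h(x) = 0` for `x ≤ 1`,
`h(x) = n(n+1)(x−n)` on `[n, n + 1/(n+1)]` and `h(x) = (n+1)(n+1−x)` on
`[n + 1/(n+1), n+1]` for `n ≥ 1`, vanishes on `ℕ` but satisfies
`ρ_ℕ^s(h) = inf_{δ>0} sup_{x ∈ ℕ^δ} |h x| = ∞`. -/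
theorem vanishes_on_N_but_strong_seminorm_infinite (h : C(ℝ, ℝ))
    (h0 : ∀ x : ℝ, x ≤ 1 → h x = 0)
    (h1 : ∀ n : ℕ, 1 ≤ n → ∀ x : ℝ, (n : ℝ) ≤ x → x ≤ (n : ℝ) + 1 / ((n : ℝ) + 1) →
      h x = (n : ℝ) * ((n : ℝ) + 1) * (x - (n : ℝ)))
    (h2 : ∀ n : ℕ, 1 ≤ n → ∀ x : ℝ, (n : ℝ) + 1 / ((n : ℝ) + 1) ≤ x → x ≤ (n : ℝ) + 1 →
      h x = ((n : ℝ) + 1) * ((n : ℝ) + 1 - x)) :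
    (∀ n : ℕ, h (n : ℝ) = 0) ∧ rhoBs (Set.range ((↑) : ℕ → ℝ)) h = ⊤ := by
  constructor
  · intro n
    rcases Nat.eq_zero_or_pos n with hn | hn
    · subst hn; exact h0 _ (by norm_num)
    · have := h1 n hn (n : ℝ) le_rfl (le_add_of_nonneg_right (by positivity))
      simp [this]
  · rw [rhoBs, iInf_eq_top]
    rintro ⟨δ, hδ⟩
    rw [eq_top_iff, ← ENNReal.iSup_natCast]
    refine iSup_le fun M => ?_
    obtain ⟨n, hn⟩ := exists_nat_gt (max (max 1 (M:ℝ)) (1/δ))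
    have hn1 : 1 ≤ n := by
      have : (1:ℝ) < n := lt_of_le_of_lt ((le_max_left _ _).trans (le_max_left _ _)) hn
      exact_mod_cast this.le
    have hnM : (M:ℝ) < n := lt_of_le_of_lt ((le_max_right _ _).trans (le_max_left _ _)) hn
    have hnδ : 1/δ < n := lt_of_le_of_lt (le_max_right _ _) hn
    have hpos : (0:ℝ) < (n:ℝ) + 1 := by positivity
    have hdist : 1 / ((n:ℝ) + 1) < δ := by
      rw [div_lt_iff₀ hpos]
      rw [div_lt_iff₀ hδ] at hnδ
      nlinarith
    set x : ℝ := (n : ℝ) + 1 / ((n:ℝ) + 1) with hx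
    have hmem : x ∈ enl (Set.range ((↑) : ℕ → ℝ)) δ := by
      refine ⟨(n:ℝ), ⟨n, rfl⟩, ?_⟩
      rw [Real.dist_eq]
      have : |x - (n:ℝ)| = 1 / ((n:ℝ)+1) := by
        have : x - (n:ℝ) = 1/((n:ℝ)+1) := by rw [hx]; ring
        rw [this, abs_of_nonneg (by positivity)]
      simpa [this] using hdist
    have hval : h x = (n : ℝ) := by
      rw [h1 n hn1 x (by rw [hx]; exact le_add_of_nonneg_right (by positivity)) le_rfl, hx]
      field_simp
      ring
    have : ((n:ℝ≥0∞)) ≤ ⨆ y ∈ enl (Set.range ((↑) : ℕ → ℝ)) δ, (‖h y‖₊ : ℝ≥0∞) := by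
      have hnorm : (‖h x‖₊ : ℝ≥0∞) = n := by
        rw [hval]
        simp
      calc ((n:ℝ≥0∞)) = (‖h x‖₊ : ℝ≥0∞) := hnorm.symm
        _ ≤ _ := le_iSup₂ (f := fun y _ => (‖h y‖₊ : ℝ≥0∞)) x hmem
    exact le_trans (by exact_mod_cast hnM.le) this
end
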